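/- arXiv:1902.06401 — 2 statements merged into one kernel-verified Lean document; each statement's English description precedes it below -/
import Mathlib

section
/- For all positive integers k and m there exists a positive integer N (one may take the k-uniform hypergraph Ramsey number R_k(k+1; (k+1)^m)) with the following property: let K_1, …, K_m be closed convex cones with ℓ(K_i) ≤ k+1 for each i ∈ [m], let S be a finite set with |S| ≥ k, and suppose for each i ∈ [m] there are maps a_i : binom(S,k) → K_i* and b_i : S → K_i such that for every k-element subset T ⊆ S and every s ∈ S, Σ_{i=1}^m ⟨a_i(T), b_i(s)⟩ = 0 if and only if s ∈ T. Then |S| < N. -/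
open scoped RealInnerProductSpace

/-- A closed convex cone (containing the origin). -/
def IsClosedConvexCone {E : Type*} [AddCommGroup E] [Module ℝ E] [TopologicalSpace E]
    (K : Set E) : Prop :=
  IsClosed K ∧ Convex ℝ K ∧ (0 : E) ∈ K ∧ ∀ x ∈ K, ∀ t : ℝ, 0 ≤ t → t • x ∈ K

/-- A proper convex cone: closed, pointed, and full-dimensional. -/
def IsProperCone {E : Type*} [AddCommGroup E] [Module ℝ E] [TopologicalSpace E]
    (C : Set E) : Prop :=
  IsClosedConvexCone C ∧ C ∩ (-C) = {0} ∧ Submodule.span ℝ C = ⊤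

/-- A face of a convex cone. -/
def IsFace {E : Type*} [AddCommGroup E] [Module ℝ E] (K F : Set E) : Prop :=
  F ⊆ K ∧ Convex ℝ F ∧
    ∀ ⦃x⦄, x ∈ K → ∀ ⦃y⦄, y ∈ K → ∀ ⦃α : ℝ⦄, 0 < α → α < 1 →
      α • x + (1 - α) • y ∈ F → x ∈ F ∧ y ∈ F

/-- `FaceChainBound K m` says that every chain of nonempty faces of `K` has length at most `m`,
i.e. `ℓ(K) ≤ m`. -/
def FaceChainBound {E : Type*} [AddCommGroup E] [Module ℝ E] (K : Set E) (m : ℕ) : Prop :=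
  ∀ (l : ℕ) (F : Fin l → Set E),
    (∀ i, IsFace K (F i) ∧ (F i).Nonempty) →
    (∀ i j : Fin l, i < j → F i ⊂ F j) → l ≤ m

/-- The ray generated by `v`. -/
def rayOf {E : Type*} [AddCommGroup E] [Module ℝ E] (v : E) : Set E :=
  {x | ∃ t : ℝ, 0 ≤ t ∧ x = t • v}

/-- `v` generates an extreme ray of `K`. -/
def IsExtremeRay {E : Type*} [AddCommGroup E] [Module ℝ E] (K : Set E) (v : E) : Prop :=
  v ∈ K ∧ v ≠ 0 ∧ IsFace K (rayOf v)

/-- The dual cone. -/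
def dualCone {E : Type*} [NormedAddCommGroup E] [InnerProductSpace ℝ E] (C : Set E) : Set E :=
  {f | ∀ x ∈ C, 0 ≤ ⟪f, x⟫}

/-- Normalized extreme rays. -/
def extSet {E : Type*} [NormedAddCommGroup E] [InnerProductSpace ℝ E] (C : Set E) : Set E :=
  {v | ‖v‖ = 1 ∧ IsExtremeRay C v}

/-- `C` is `k`-neighborly with respect to `V ⊆ ext C`. -/
def IsNeighborly {E : Type*} [NormedAddCommGroup E] [InnerProductSpace ℝ E]
    (C : Set E) (k : ℕ) (V : Set E) : Prop :=
  V ⊆ extSet C ∧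
    ∀ W ⊆ V, W.Finite → W.ncard = k →
      ∃ f ∈ dualCone C, (∀ v ∈ W, ⟪f, v⟫ = 0) ∧ ∀ v ∈ V \ W, 0 < ⟪f, v⟫

/-!
The proof is by induction on `m`, with `N = k + 1` for `m = 0`. For the last cone `K`, colour every
`j`-subset `A` of `S` (`j ≤ k`) by the height of the smallest face `G A` of `K` containing `b '' A`
among the nonempty faces; heights lie in `{0, …, k}` because `ℓ(K) ≤ k + 1`. On a large subset `U`
that is monochromatic in every size `j ≤ k` (hypergraph Ramsey), the heights of the layers cannot
increase `k + 1` times, so some `j ≤ k` has `G (A ∪ {s}) = G A` for all `j`-subsets `A` and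
`s ∈ U`. Hence `b s ∈ G T ⊆ K ∩ (a T)^⊥` for every `k`-subset `T` of `U`, the last summand vanishes
on `U`, and the induction hypothesis bounds `|U|`.
-/

open Finset Order

universe u

section Ramsey

variable {α : Type*} {ι : Type*}

def IsMonochromatic (χ : Finset α → ι) (r : ℕ) (U : Finset α) : Prop :=
  ∀ ⦃T₁⦄, T₁ ⊆ U → T₁.card = r → ∀ ⦃T₂⦄, T₂ ⊆ U → T₂.card = r → χ T₁ = χ T₂

lemma IsMonochromatic.comp {ι' : Type*} {χ : Finset α → ι} {r : ℕ} {U : Finset α}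
    (h : IsMonochromatic χ r U) (f : ι → ι') : IsMonochromatic (f ∘ χ) r U :=
  fun _ h₁ c₁ _ h₂ c₂ => congrArg f (h h₁ c₁ h₂ c₂)

lemma IsMonochromatic.mono {χ : Finset α → ι} {r : ℕ} {U V : Finset α}
    (h : IsMonochromatic χ r V) (hUV : U ⊆ V) : IsMonochromatic χ r U :=
  fun _ h₁ c₁ _ h₂ c₂ => h (h₁.trans hUV) c₁ (h₂.trans hUV) c₂

lemma isMonochromatic_of_forall_eq {χ : Finset α → ι} {r : ℕ} {U : Finset α} {c : ι}
    (h : ∀ T ⊆ U, T.card = r → χ T = c) : IsMonochromatic χ r U :=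
  fun _ h₁ c₁ _ h₂ c₂ => (h _ h₁ c₁).trans (h _ h₂ c₂).symm

lemma IsMonochromatic.exists_eq [Nonempty ι] {χ : Finset α → ι} {r : ℕ} {U : Finset α}
    (h : IsMonochromatic χ r U) : ∃ c, ∀ T ⊆ U, T.card = r → χ T = c := by
  by_cases hT : ∃ T ⊆ U, T.card = r
  · obtain ⟨T₀, hT₀U, hT₀r⟩ := hT
    exact ⟨χ T₀, fun T hTU hTr => h hTU hTr hT₀U hT₀r⟩
  · exact ⟨Classical.arbitrary ι, fun T hTU hTr => absurd ⟨T, hTU, hTr⟩ hT⟩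

def IsRamseyBound (c R t n : ℕ) : Prop :=
  ∀ {α : Type u} (S : Finset α) (χ : Finset α → Fin c), n ≤ S.card →
    ∃ U ⊆ S, U.card = t ∧ ∀ r ≤ R, IsMonochromatic χ r U

lemma exists_endHomogeneous_seq {c R : ℕ} (hR : ∀ t, ∃ n, IsRamseyBound.{u} c R t n) (L : ℕ) :
    ∃ n, ∀ {α : Type u} [DecidableEq α] (S : Finset α) (χ : Finset α → Fin c), n ≤ S.card →
      ∃ (x : Fin L ↪ α) (γ : Fin L → Fin c), (∀ l, x l ∈ S) ∧
        ∀ l, ∀ T ⊆ (Ioi l).map x, T.card = R → χ (insert (x l) T) = γ l := by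
  induction L with
  | zero => exact ⟨0, fun _ _ _ => ⟨.ofIsEmpty, isEmptyElim, isEmptyElim, isEmptyElim⟩⟩
  | succ L ih =>
    -- Erdős–Rado stepping up: the first term `x₀` is followed by a sequence inside a set `A` on
    -- which `T ↦ χ (insert x₀ T)` is monochromatic
    obtain ⟨nL, hL⟩ := ih
    obtain ⟨nR, hnR⟩ := hR nL
    refine ⟨nR + 1, fun {α} _ S χ hS => ?_⟩
    obtain ⟨x₀, hx₀⟩ : S.Nonempty := card_pos.mp (by omega)
    obtain ⟨A, hAS, hAc, hA⟩ := hnR (S.erase x₀) (fun T => χ (insert x₀ T))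
      (by rw [card_erase_of_mem hx₀]; omega)
    have : Nonempty (Fin c) := ⟨χ ∅⟩
    obtain ⟨γ₀, hγ₀⟩ := (hA R le_rfl).exists_eq
    obtain ⟨x', γ', hx'A, hx'⟩ := hL A χ hAc.ge
    have hx₀x' : x₀ ∉ Set.range x' := by
      rintro ⟨l, rfl⟩
      exact (mem_erase.mp (hAS (hx'A l))).1 rfl
    let x : Fin (L + 1) ↪ α := ⟨Fin.cons x₀ x', Fin.cons_injective_iff.mpr ⟨hx₀x', x'.injective⟩⟩
    have hmap_succ (I : Finset (Fin L)) : (I.map (Fin.succEmb L)).map x = I.map x' := by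
      rw [map_map]; congr 1
    refine ⟨x, Fin.cons γ₀ γ', Fin.cases hx₀ fun l => mem_of_mem_erase (hAS (hx'A l)), ?_⟩
    intro l T hT hTR
    cases l using Fin.cases with
    | zero =>
      rw [Fin.Ioi_zero_eq_map, hmap_succ] at hT
      exact hγ₀ T (hT.trans fun y hy => by
        obtain ⟨l, -, rfl⟩ := mem_map.mp hy; exact hx'A l) hTR
    | succ l =>
      rw [← Fin.map_succEmb_Ioi, hmap_succ] at hT
      exact hx' l T hT hTR

lemma exists_isMonochromatic_succ {c R : ℕ} (hR : ∀ t, ∃ n, IsRamseyBound.{u} c R t n) (t : ℕ) :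
    ∃ n, ∀ {α : Type u} (S : Finset α) (χ : Finset α → Fin c), n ≤ S.card →
      ∃ U ⊆ S, U.card = t ∧ IsMonochromatic χ (R + 1) U := by
  classical
  obtain ⟨n, hn⟩ := exists_endHomogeneous_seq hR (c * t)
  refine ⟨n, fun S χ hS => ?_⟩
  obtain ⟨x, γ, hxS, hxγ⟩ := hn S χ hS
  have : Nonempty (Fin c) := ⟨χ ∅⟩
  obtain ⟨γ₀, hγ₀⟩ := Fintype.exists_le_card_fiber_of_mul_le_card γ (n := t) (by simp)
  obtain ⟨I, hI, hIt⟩ := exists_subset_card_eq hγ₀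
  refine ⟨I.map x, fun y hy => ?_, by rw [card_map, hIt], isMonochromatic_of_forall_eq (c := γ₀) ?_⟩
  · obtain ⟨l, -, rfl⟩ := mem_map.mp hy
    exact hxS l
  intro T hT hTR
  obtain ⟨J, hJI, rfl⟩ := subset_map_iff.mp hT
  have hJ : J.Nonempty := card_pos.mp (by rw [card_map] at hTR; omega)
  have hJmin : J.min' hJ ∈ I := hJI (J.min'_mem hJ)
  -- the smallest index of `J` determines the colour
  rw [← insert_erase (J.min'_mem hJ), map_insert,
    hxγ _ _ (map_subset_map.mpr fun l hl => mem_Ioi.mpr (J.min'_lt_of_mem_erase_min' hJ hl))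
      (by rw [card_map, card_erase_of_mem (J.min'_mem hJ)]; rw [card_map] at hTR; omega)]
  exact (mem_filter.mp (hI hJmin)).2

theorem exists_isRamseyBound (c R t : ℕ) : ∃ n, IsRamseyBound.{u} c R t n := by
  induction R generalizing t with
  | zero =>
    refine ⟨t, fun S _ hS => ?_⟩
    obtain ⟨U, hUS, hUt⟩ := exists_subset_card_eq hS
    refine ⟨U, hUS, hUt, fun r hr T₁ _ h₁ T₂ _ h₂ => ?_⟩
    rw [card_eq_zero.mp (h₁.trans (by omega)), card_eq_zero.mp (h₂.trans (by omega))]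
  | succ R ih =>
    obtain ⟨n₀, hn₀⟩ := ih t
    obtain ⟨n, hn⟩ := exists_isMonochromatic_succ ih n₀
    refine ⟨n, fun S χ hS => ?_⟩
    obtain ⟨U₁, hU₁S, hU₁c, hU₁⟩ := hn S χ hS
    obtain ⟨U, hUU₁, hUt, hU⟩ := hn₀ U₁ χ hU₁c.ge
    refine ⟨U, hUU₁.trans hU₁S, hUt, fun r hr => ?_⟩
    rcases Nat.lt_or_eq_of_le hr with hr | rfl
    · exact hU r (by omega)
    · exact hU₁.mono hUU₁

end Ramsey

section Faces

variable {E : Type*} [AddCommGroup E] [Module ℝ E] {K F X Y : Set E}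

lemma isFace_self (hK : Convex ℝ K) : IsFace K K :=
  ⟨subset_rfl, hK, fun _ hx _ hy _ _ _ _ => ⟨hx, hy⟩⟩

lemma isFace_sInter {𝓕 : Set (Set E)} (hne : 𝓕.Nonempty) (h𝓕 : ∀ F ∈ 𝓕, IsFace K F) :
    IsFace K (⋂₀ 𝓕) := by
  obtain ⟨F₀, hF₀⟩ := hne
  refine ⟨(Set.sInter_subset_of_mem hF₀).trans (h𝓕 F₀ hF₀).1,
    convex_sInter fun F hF => (h𝓕 F hF).2.1, fun _ hx _ hy _ hα₀ hα₁ hxy => ?_⟩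
  have h := fun F hF => (h𝓕 F hF).2.2 hx hy hα₀ hα₁ (Set.mem_sInter.mp hxy F hF)
  exact ⟨Set.mem_sInter.mpr fun F hF => (h F hF).1, Set.mem_sInter.mpr fun F hF => (h F hF).2⟩

-- `0` is included so that the face is nonempty even for `X = ∅`.
def minimalFace (K X : Set E) : Set E :=
  ⋂₀ {F | IsFace K F ∧ (0 : E) ∈ F ∧ X ⊆ F}

lemma isFace_minimalFace (hK : Convex ℝ K) (h0 : (0 : E) ∈ K) (hX : X ⊆ K) :
    IsFace K (minimalFace K X) :=
  isFace_sInter ⟨K, isFace_self hK, h0, hX⟩ fun _ hF => hF.1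

lemma zero_mem_minimalFace : (0 : E) ∈ minimalFace K X :=
  Set.mem_sInter.mpr fun _ hF => hF.2.1

lemma subset_minimalFace : X ⊆ minimalFace K X :=
  fun _ hx => Set.mem_sInter.mpr fun _ hF => hF.2.2 hx

lemma minimalFace_subset (hF : IsFace K F) (h0 : (0 : E) ∈ F) (hXF : X ⊆ F) :
    minimalFace K X ⊆ F :=
  Set.sInter_subset_of_mem ⟨hF, h0, hXF⟩

lemma minimalFace_mono (h : X ⊆ Y) : minimalFace K X ⊆ minimalFace K Y :=
  Set.sInter_subset_sInter fun _ hF => ⟨hF.1, hF.2.1, h.trans hF.2.2⟩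

abbrev NonemptyFace (K : Set E) := {F : Set E // IsFace K F ∧ F.Nonempty}

lemma height_le_of_faceChainBound {k : ℕ} (hK : FaceChainBound K (k + 1)) (F : NonemptyFace K) :
    height F ≤ k := by
  refine height_le fun p _ => ?_
  have := hK (p.length + 1) (fun i => (p i).1) (fun i => (p i).2) fun _ _ hij => p.strictMono hij
  exact_mod_cast (by omega : p.length ≤ k)

end Faces

lemma isFace_setOf_inner_eq_zero {E : Type*} [NormedAddCommGroup E] [InnerProductSpace ℝ E]
    {K : Set E} (hK : Convex ℝ K) {a : E} (ha : a ∈ dualCone K) :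
    IsFace K {x | x ∈ K ∧ ⟪a, x⟫ = 0} := by
  refine ⟨fun x hx => hx.1, fun x hx y hy s t hs ht hst => ⟨hK hx.1 hy.1 hs ht hst, ?_⟩,
    fun x hx y hy α hα₀ hα₁ hxy => ?_⟩
  · rw [inner_add_right, real_inner_smul_right, real_inner_smul_right, hx.2, hy.2]
    ring
  · have h := hxy.2
    rw [inner_add_right, real_inner_smul_right, real_inner_smul_right] at h
    have hx₀ := ha x hx
    have hy₀ := ha y hy
    exact ⟨⟨hx, by nlinarith⟩, ⟨hy, by nlinarith⟩⟩

lemma strictMono_toNat_height {P : Type*} [Preorder P] {k : ℕ} (h : ∀ p : P, height p ≤ k) :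
    StrictMono fun p : P => (height p).toNat := by
  intro x y hxy
  have hfin (p : P) : height p ≠ ⊤ := ((h p).trans_lt (ENat.natCast_lt_top k)).ne
  have hlt := height_strictMono hxy (lt_top_iff_ne_top.mpr (hfin x))
  rw [← ENat.natCast_toNat (hfin x), ← ENat.natCast_toNat (hfin y)] at hlt
  exact_mod_cast hlt

lemma exists_forall_insert_eq {α P : Type*} [DecidableEq α] [PartialOrder P] {ρ : P → ℕ}
    (hρ : StrictMono ρ) {k : ℕ} (hρk : ∀ p, ρ p ≤ k) {G : Finset α → P} (hG : Monotone G)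
    {U : Finset α} (hU : ∀ r ≤ k, IsMonochromatic (ρ ∘ G) r U) :
    ∃ j ≤ k, ∀ A ⊆ U, A.card = j → ∀ s ∈ U, G (insert s A) = G A := by
  by_contra! hgrow
  -- otherwise `ρ` would strictly increase along `k + 2` layers
  have hchain : ∀ j ≤ k + 1, ∃ B ⊆ U, B.card = j ∧ j ≤ ρ (G B) := by
    intro j
    induction j with
    | zero => exact fun _ => ⟨∅, empty_subset U, card_empty, Nat.zero_le _⟩
    | succ j ih =>
      intro hj
      obtain ⟨B, hBU, hBc, hBρ⟩ := ih (by omega)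
      obtain ⟨A, hAU, hAc, s, hsU, hne⟩ := hgrow j (by omega)
      have hsA : s ∉ A := fun hs => hne (by rw [insert_eq_of_mem hs])
      have hAB : ρ (G A) = ρ (G B) := hU j (by omega) hAU hAc hBU hBc
      have hlt : ρ (G A) < ρ (G (insert s A)) :=
        hρ ((hG (subset_insert s A)).lt_of_ne (Ne.symm hne))
      exact ⟨insert s A, insert_subset hsU hAU, by rw [card_insert_of_notMem hsA, hAc], by omega⟩
  obtain ⟨B, -, -, hB⟩ := hchain (k + 1) le_rfl
  have := hρk (G B)
  omega

section Cone

variable {E : Type*} [AddCommGroup E] [Module ℝ E] {K : Set E} {k : ℕ}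

lemma exists_subset_forall_mem_minimalFace (hK : Convex ℝ K) (h0 : (0 : E) ∈ K)
    (hKk : FaceChainBound K (k + 1)) {t n : ℕ} (hn : IsRamseyBound.{u} (k + 1) k t n)
    {α : Type u} (S : Finset α) (b : α → E) (hb : ∀ s ∈ S, b s ∈ K) (hS : n ≤ S.card) :
    ∃ U ⊆ S, U.card = t ∧ ∀ T ⊆ U, k ≤ T.card → ∀ s ∈ U, b s ∈ minimalFace K (b '' T ∩ K) := by
  classical
  -- intersecting with `K` makes `G` a face for every finset, not only for subsets of `S`
  let G : Finset α → NonemptyFace K := fun A =>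
    ⟨minimalFace K (b '' A ∩ K), isFace_minimalFace hK h0 Set.inter_subset_right,
      0, zero_mem_minimalFace⟩
  have hG : Monotone G := fun A B hAB =>
    minimalFace_mono (Set.inter_subset_inter_left _ (Set.image_mono (coe_subset.mpr hAB)))
  have hρk (F : NonemptyFace K) : (height F).toNat ≤ k :=
    ENat.toNat_le_of_le_natCast (height_le_of_faceChainBound hKk F)
  obtain ⟨U, hUS, hUt, hU⟩ := hn S (fun A => ⟨(height (G A)).toNat, Nat.lt_succ_of_le (hρk _)⟩) hS
  obtain ⟨j, hjk, hj⟩ := exists_forall_insert_eq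
    (strictMono_toNat_height (height_le_of_faceChainBound hKk)) hρk hG
    fun r hr => (hU r hr).comp Fin.val
  refine ⟨U, hUS, hUt, fun T hTU hTk s hsU => ?_⟩
  obtain ⟨A, hAT, hAc⟩ := exists_subset_card_eq (hjk.trans hTk)
  have hs : b s ∈ (G (insert s A)).1 :=
    subset_minimalFace ⟨⟨s, by simp, rfl⟩, hb s (hUS hsU)⟩
  rw [hj A (hAT.trans hTU) hAc s hsU] at hs
  exact hG hAT hs

end Cone

def RealizationBound (k m N : ℕ) : Prop :=
  ∀ (d : Fin m → ℕ) (K : ∀ i : Fin m, Set (EuclideanSpace ℝ (Fin (d i)))),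
    (∀ i, IsClosedConvexCone (K i)) →
    (∀ i, FaceChainBound (K i) (k + 1)) →
    ∀ (α : Type) (S : Finset α)
      (a : ∀ i : Fin m, Finset α → EuclideanSpace ℝ (Fin (d i)))
      (b : ∀ i : Fin m, α → EuclideanSpace ℝ (Fin (d i))),
      k ≤ S.card →
      (∀ i (T : Finset α), T ⊆ S → T.card = k → a i T ∈ dualCone (K i)) →
      (∀ i s, s ∈ S → b i s ∈ K i) →
      (∀ T : Finset α, T ⊆ S → T.card = k → ∀ s ∈ S,
        ((∑ i : Fin m, ⟪a i T, b i s⟫) = 0 ↔ s ∈ T)) →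
      S.card < N

lemma RealizationBound.mono {k m N N' : ℕ} (h : RealizationBound k m N) (hN : N ≤ N') :
    RealizationBound k m N' :=
  fun d K hK hKk α S a b hkS ha hb hab => (h d K hK hKk α S a b hkS ha hb hab).trans_le hN

lemma realizationBound_zero (k : ℕ) : RealizationBound k 0 (k + 1) := by
  intro _ _ _ _ α S _ _ hkS _ _ hab
  obtain ⟨T, hTS, hTk⟩ := exists_subset_card_eq hkS
  have hST : S ⊆ T := fun s hs => (hab T hTS hTk s hs).mp (by simp)
  have := card_le_card hST
  omega

lemma RealizationBound.exists_succ {k m N : ℕ} (h : RealizationBound k m N) :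
    ∃ N', RealizationBound k (m + 1) N' := by
  obtain ⟨n, hn⟩ := exists_isRamseyBound.{0} (k + 1) k (max N k)
  refine ⟨n, fun d K hK hKk α S a b hkS ha hb hab => ?_⟩
  by_contra! hnS
  obtain ⟨U, hUS, hUc, hU⟩ := exists_subset_forall_mem_minimalFace (hK (Fin.last m)).2.1
    (hK (Fin.last m)).2.2.1 (hKk (Fin.last m)) hn S (b (Fin.last m)) (hb _) hnS
  have hlast {T} (hTU : T ⊆ U) (hTk : T.card = k) {s} (hsU : s ∈ U) :
      ⟪a (Fin.last m) T, b (Fin.last m) s⟫ = 0 := by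
    have hTS := hTU.trans hUS
    have hperp : b (Fin.last m) '' T ∩ K (Fin.last m) ⊆
        {x | x ∈ K (Fin.last m) ∧ ⟪a (Fin.last m) T, x⟫ = 0} := by
      rintro _ ⟨⟨t, ht, rfl⟩, htK⟩
      have hsum := (hab T hTS hTk t (hTS ht)).mpr ht
      exact ⟨htK, (sum_eq_zero_iff_of_nonneg fun i _ => ha i T hTS hTk _ (hb i t (hTS ht))).mp
        hsum _ (mem_univ _)⟩
    exact (minimalFace_subset (isFace_setOf_inner_eq_zero (hK _).2.1 (ha _ T hTS hTk))
      ⟨(hK _).2.2.1, inner_zero_right _⟩ hperp (hU T hTU hTk.ge s hsU)).2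
  have hUN := h (fun i => d i.castSucc) (fun i => K i.castSucc) (fun _ => hK _) (fun _ => hKk _)
    α U (fun i => a i.castSucc) (fun i => b i.castSucc) (by omega)
    (fun i T hTU hTk => ha _ T (hTU.trans hUS) hTk) (fun i s hs => hb _ s (hUS hs))
    fun T hTU hTk s hsU => by
      rw [← hab T (hTU.trans hUS) hTk s (hUS hsU), Fin.sum_univ_castSucc, hlast hTU hTk hsU,
        add_zero]
  omega

lemma exists_realizationBound (k m : ℕ) : ∃ N, RealizationBound k m N := by
  induction m with
  | zero => exact ⟨k + 1, realizationBound_zero k⟩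
  | succ m ih =>
    obtain ⟨N, hN⟩ := ih
    exact hN.exists_succ

theorem statement_2_general (k m : ℕ) :
    ∃ N : ℕ, 0 < N ∧
      ∀ (d : Fin m → ℕ) (K : ∀ i : Fin m, Set (EuclideanSpace ℝ (Fin (d i)))),
        (∀ i, IsClosedConvexCone (K i)) →
        (∀ i, FaceChainBound (K i) (k + 1)) →
        ∀ (α : Type) (S : Finset α)
          (a : ∀ i : Fin m, Finset α → EuclideanSpace ℝ (Fin (d i)))
          (b : ∀ i : Fin m, α → EuclideanSpace ℝ (Fin (d i))),
          k ≤ S.card →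
          (∀ i (T : Finset α), T ⊆ S → T.card = k → a i T ∈ dualCone (K i)) →
          (∀ i s, s ∈ S → b i s ∈ K i) →
          (∀ T : Finset α, T ⊆ S → T.card = k → ∀ s ∈ S,
            ((∑ i : Fin m, ⟪a i T, b i s⟫) = 0 ↔ s ∈ T)) →
          S.card < N := by
  obtain ⟨N, hN⟩ := exists_realizationBound k m
  exact ⟨N + 1, N.succ_pos, hN.mono N.le_succ⟩

/-- (Generalization of Averkov's main lemma.) For all positive integers `k`
and `m` there is a positive integer `N` (e.g. the Ramsey number `R_k(k+1; (k+1)^m)`) such that: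
if `K₁, …, Kₘ` are closed convex cones with `ℓ(Kᵢ) ≤ k + 1`, `S` is a finite set with `|S| ≥ k`,
and for each `i` there are maps `aᵢ : binom(S,k) → Kᵢ*` and `bᵢ : S → Kᵢ` with
`Σᵢ ⟨aᵢ(T), bᵢ(s)⟩ = 0 ↔ s ∈ T`, then `|S| < N`. -/
theorem statement_2 (k m : ℕ) (hk : 0 < k) (hm : 0 < m) :
    ∃ N : ℕ, 0 < N ∧
      ∀ (d : Fin m → ℕ) (K : ∀ i : Fin m, Set (EuclideanSpace ℝ (Fin (d i)))),
        (∀ i, IsClosedConvexCone (K i)) →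
        (∀ i, FaceChainBound (K i) (k + 1)) →
        ∀ (α : Type) (S : Finset α)
          (a : ∀ i : Fin m, Finset α → EuclideanSpace ℝ (Fin (d i)))
          (b : ∀ i : Fin m, α → EuclideanSpace ℝ (Fin (d i))),
          k ≤ S.card →
          (∀ i (T : Finset α), T ⊆ S → T.card = k → a i T ∈ dualCone (K i)) →
          (∀ i s, s ∈ S → b i s ∈ K i) →
          (∀ T : Finset α, T ⊆ S → T.card = k → ∀ s ∈ S,
            ((∑ i : Fin m, ⟪a i T, b i s⟫) = 0 ↔ s ∈ T)) →
          S.card < N :=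
  statement_2_general k m
end

section
/- Let K be a closed convex cone and suppose x_1, x_2, …, x_n ∈ K are such that x_1 + ⋯ + x_n lies in the relative interior of K. Then there exists a subset I ⊆ [n] with |I| ≤ ℓ(K) − 1 such that Σ_{i∈I} x_i lies in the relative interior of K (equivalently, the smallest face of K containing Σ_{i∈I} x_i is K itself), where the empty sum is interpreted as 0. -/
/-- `ℓ(K)`: the maximum length of a chain `F₁ ⊊ F₂ ⊊ ⋯ ⊊ F_l` of nonempty faces of `K`. -/
noncomputable def faceChainLength {E : Type*} [AddCommGroup E] [Module ℝ E] (K : Set E) : ℕ :=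
  sSup {l : ℕ | ∃ F : Fin l → Set E,
    (∀ i, IsFace K (F i) ∧ (F i).Nonempty) ∧ ∀ i j : Fin l, i < j → F i ⊂ F j}

/-!
Grow `I` greedily: starting from `I = ∅`, add any `xᵢ` that is not yet in the smallest face
`F(∑_{i∈I} xᵢ)`. Each addition makes that face strictly larger, so the faces met along the way form
a chain of `|I| + 1` faces and `|I| ≤ ℓ(K) - 1`. When no `xᵢ` can be added, the whole sum lies in
`F(∑_{i∈I} xᵢ)`, i.e. `t • ∑_{i∈I} xᵢ - ∑ᵢ xᵢ ∈ K` for some `t ≥ 0`; writing `∑_{i∈I} xᵢ` as a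
proper convex combination of the relative-interior point `∑ᵢ xᵢ` and a point of `K` puts it in the
relative interior. As `ℓ(K)` is a supremum, chain lengths must also be bounded, here by `d + 1`: the
linear spans of a strict chain of faces increase strictly.
-/

theorem Convex.combo_intrinsicInterior_self_mem_intrinsicInterior {E : Type*} [AddCommGroup E]
    [Module ℝ E] [TopologicalSpace E] [IsTopologicalAddGroup E] [ContinuousSMul ℝ E]
    {s : Set E} (hs : Convex ℝ s) {x y : E} (hx : x ∈ intrinsicInterior ℝ s) (hy : y ∈ s)
    {a b : ℝ} (ha : 0 < a) (hb : 0 ≤ b) (hab : a + b = 1) :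
    a • x + b • y ∈ intrinsicInterior ℝ s := by
  obtain ⟨x', hx', rfl⟩ := mem_intrinsicInterior.1 hx
  have hyA : y ∈ affineSpan ℝ s := subset_affineSpan ℝ s hy
  -- `g`, the homothety of ratio `a⁻¹` about `y`, inverts `f`, and `g q ∈ s → q ∈ s` by convexity,
  -- so `g` pulls a neighbourhood of `x'` inside `s` back to a neighbourhood of `f x'` inside `s`.
  let f : affineSpan ℝ s → affineSpan ℝ s :=
    fun q => ⟨AffineMap.lineMap y q a, AffineMap.lineMap_mem _ hyA q.2⟩
  let g : affineSpan ℝ s → affineSpan ℝ s :=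
    fun q => ⟨AffineMap.lineMap y q a⁻¹, AffineMap.lineMap_mem _ hyA q.2⟩
  have hg : Continuous g :=
    (continuous_const.lineMap continuous_subtype_val continuous_const).subtype_mk _
  have hgf : g (f x') = x' := by
    ext; simp [f, g, inv_mul_cancel₀ ha.ne']
  have hfg (q) : f (g q) = q := by
    ext; simp [f, g, mul_inv_cancel₀ ha.ne']
  have hcombo : a • (x' : E) + b • y = f x' := by
    obtain rfl : b = 1 - a := by linarith
    simp [f, AffineMap.lineMap_apply_module, add_comm]
  refine mem_intrinsicInterior.2 ⟨f x', ?_, hcombo.symm⟩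
  rw [mem_interior_iff_mem_nhds] at hx' ⊢
  rw [← hgf] at hx'
  filter_upwards [hg.continuousAt.preimage_mem_nhds hx'] with q hq
  rw [← hfg q]
  exact hs.lineMap_mem hy hq ⟨ha.le, by linarith⟩

def Convex.toPointedCone {E : Type*} [AddCommGroup E] [Module ℝ E] {s : Set E}
    (hs : Convex ℝ s) (hzero : (0 : E) ∈ s) (hsmul : ∀ x ∈ s, ∀ t : ℝ, 0 ≤ t → t • x ∈ s) :
    PointedCone ℝ E where
  carrier := s
  zero_mem' := hzero
  add_mem' {a b} ha hb := by
    simpa [smul_add, smul_smul] using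
      hsmul _ (hs ha hb one_half_pos.le one_half_pos.le (add_halves 1)) 2 zero_le_two
  smul_mem' c _ hx := hsmul _ hx c c.2

def IsClosedConvexCone.toPointedCone {E : Type*} [AddCommGroup E] [Module ℝ E]
    [TopologicalSpace E] {K : Set E} (hK : IsClosedConvexCone K) : PointedCone ℝ E :=
  hK.2.1.toPointedCone hK.2.2.1 hK.2.2.2

namespace PointedCone

section MinFace

variable {𝕜 E : Type*} [Field 𝕜] [LinearOrder 𝕜] [IsStrictOrderedRing 𝕜] [AddCommGroup E]
  [Module 𝕜 E] (C : PointedCone 𝕜 E)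

-- The paper's `F_C(S)`: for `S ∈ C`, the smallest face of `C` containing `S`.
def minFace (S : E) : PointedCone 𝕜 E where
  carrier := {y | y ∈ C ∧ ∃ t : 𝕜, 0 ≤ t ∧ t • S - y ∈ C}
  zero_mem' := ⟨C.zero_mem, 0, le_rfl, by simp⟩
  add_mem' := by
    rintro y z ⟨hy, s, hs, hsy⟩ ⟨hz, t, ht, htz⟩
    refine ⟨C.add_mem hy hz, s + t, add_nonneg hs ht, ?_⟩
    convert C.add_mem hsy htz using 1
    module
  smul_mem' := by
    rintro c y ⟨hy, t, ht, hty⟩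
    refine ⟨C.smul_mem c.2 hy, c * t, mul_nonneg c.2 ht, ?_⟩
    convert C.smul_mem c.2 hty using 1
    rw [smul_sub, mul_smul]
    rfl

variable {C}

theorem minFace_isFaceOf (S : E) : (C.minFace S).IsFaceOf C := by
  refine .of_mem_of_add_mem_left (fun y hy => hy.1) ?_
  rintro y z hy hz ⟨-, t, ht, htyz⟩
  refine ⟨hy, t, ht, ?_⟩
  convert C.add_mem htyz hz using 1
  abel

theorem mem_minFace_self {S : E} (hS : S ∈ C) : S ∈ C.minFace S :=
  ⟨hS, 1, zero_le_one, by simp⟩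

theorem minFace_lt_minFace_add {S c : E} (hS : S ∈ C) (hc : c ∈ C) (hcS : c ∉ C.minFace S) :
    C.minFace S < C.minFace (S + c) := by
  refine lt_of_le_of_ne (fun y ⟨hy, t, ht, hty⟩ => ⟨hy, t, ht, ?_⟩) ?_
  · convert C.add_mem hty (C.smul_mem ht hc) using 1
    module
  · rintro h
    exact hcS (h ▸ ⟨hc, 1, zero_le_one, by simpa using hS⟩)

theorem mem_minFace_sum {ι : Type*} {I : Finset ι} {x : ι → E} (hx : ∀ i ∈ I, x i ∈ C) {i : ι}
    (hi : i ∈ I) : x i ∈ C.minFace (∑ j ∈ I, x j) := by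
  classical
  have hrest : ∑ j ∈ I.erase i, x j ∈ C := C.sum_mem fun j hj => hx j (Finset.mem_of_mem_erase hj)
  refine (minFace_isFaceOf _).mem_of_add_mem_left (hx i hi) hrest ?_
  rw [Finset.add_sum_erase I x hi]
  exact mem_minFace_self (C.sum_mem hx)

/-- `I` is chosen maximal among the sets whose face `F_C(∑_{i∈I} xᵢ)` ends a chain of
`|I| + 1` faces; a summand outside that face would extend the chain. -/
theorem exists_ltSeries_faces_sum_mem_minFace {ι : Type*} [Fintype ι] (x : ι → E)
    (hx : ∀ i, x i ∈ C) :
    ∃ I : Finset ι, ∃ p : LTSeries {F : PointedCone 𝕜 E // F.IsFaceOf C},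
      p.length = I.card ∧ ∑ i, x i ∈ C.minFace (∑ i ∈ I, x i) := by
  classical
  let face (I : Finset ι) : {F : PointedCone 𝕜 E // F.IsFaceOf C} :=
    ⟨C.minFace (∑ i ∈ I, x i), minFace_isFaceOf _⟩
  let reachable : Set (Finset ι) :=
    {I | ∃ p : LTSeries {F : PointedCone 𝕜 E // F.IsFaceOf C}, p.length = I.card ∧ p.last = face I}
  obtain ⟨I, ⟨p, hp, hlast⟩, hmax⟩ := reachable.toFinite.exists_maximalFor Finset.card reachable
    ⟨∅, RelSeries.singleton _ (face ∅), rfl, rfl⟩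
  refine ⟨I, p, hp, (C.minFace _).sum_mem fun i _ => ?_⟩
  by_contra hi
  have hiI : i ∉ I := fun h => hi (mem_minFace_sum (fun j _ => hx j) h)
  have hgrow : p.last < face (insert i I) := by
    rw [hlast, ← Subtype.coe_lt_coe]
    simpa only [face, Finset.sum_insert hiI, add_comm (x i)] using
      minFace_lt_minFace_add (C.sum_mem fun j _ => hx j) (hx i) hi
  have hreach : insert i I ∈ reachable :=
    ⟨p.snoc _ hgrow, by simp [hp, Finset.card_insert_of_notMem hiI], p.last_snoc _ _⟩
  have := hmax hreach (Finset.card_le_card (Finset.subset_insert i I))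
  rw [Finset.card_insert_of_notMem hiI] at this
  omega

end MinFace

section Span

variable {𝕜 E : Type*} [Ring 𝕜] [LinearOrder 𝕜] [IsOrderedRing 𝕜] [AddCommGroup E]
  [Module 𝕜 E]

theorem exists_sub_of_mem_span {F : PointedCone 𝕜 E} {v : E}
    (hv : v ∈ Submodule.span 𝕜 (F : Set E)) : ∃ a ∈ F, ∃ b ∈ F, v = a - b := by
  induction hv using Submodule.span_induction with
  | mem u hu => exact ⟨u, hu, 0, F.zero_mem, (sub_zero u).symm⟩
  | zero => exact ⟨0, F.zero_mem, 0, F.zero_mem, (sub_zero 0).symm⟩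
  | add u w _ _ ihu ihw =>
    obtain ⟨a, ha, b, hb, rfl⟩ := ihu
    obtain ⟨c, hc, e, he, rfl⟩ := ihw
    exact ⟨a + c, F.add_mem ha hc, b + e, F.add_mem hb he, (add_sub_add_comm a c b e).symm⟩
  | smul c u _ ihu =>
    obtain ⟨a, ha, b, hb, rfl⟩ := ihu
    rcases le_total 0 c with hc | hc
    · exact ⟨c • a, F.smul_mem hc ha, c • b, F.smul_mem hc hb, smul_sub c a b⟩
    · exact ⟨(-c) • b, F.smul_mem (neg_nonneg.2 hc) hb, (-c) • a,
        F.smul_mem (neg_nonneg.2 hc) ha, by rw [neg_smul, neg_smul, neg_sub_neg, smul_sub]⟩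

theorem IsFaceOf.span_lt_span {C F G : PointedCone 𝕜 E} (hF : F.IsFaceOf C) (hG : G ≤ C)
    (hFG : F < G) : Submodule.span 𝕜 (F : Set E) < Submodule.span 𝕜 (G : Set E) := by
  refine lt_of_le_of_ne (Submodule.span_mono hFG.le) fun hspan => hFG.not_ge fun y hy => ?_
  obtain ⟨a, ha, b, hb, rfl⟩ := exists_sub_of_mem_span (hspan ▸ Submodule.subset_span hy)
  exact hF.mem_of_add_mem_left (hG hy) (hF.le hb) (by rwa [sub_add_cancel])

end Span

theorem IsFaceOf.isFace {E : Type*} [AddCommGroup E] [Module ℝ E] {C F : PointedCone ℝ E}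
    (h : F.IsFaceOf C) : IsFace (C : Set E) F :=
  ⟨h.le, F.convex, fun _ hx _ hy _ h0 h1 hxy =>
    ⟨h.mem_of_smul_add_smul_mem_left hx hy h0 (sub_pos.2 h1) hxy,
      h.mem_of_smul_add_smul_mem_right hx hy h0 (sub_pos.2 h1) hxy⟩⟩

theorem mem_intrinsicInterior_of_mem_minFace {E : Type*} [AddCommGroup E] [Module ℝ E]
    [TopologicalSpace E] [IsTopologicalAddGroup E] [ContinuousSMul ℝ E] {C : PointedCone ℝ E}
    {S T : E} (hT : T ∈ intrinsicInterior ℝ (C : Set E)) (hS : S ∈ C) (hTS : T ∈ C.minFace S) :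
    S ∈ intrinsicInterior ℝ (C : Set E) := by
  obtain ⟨-, t, ht, htST⟩ := hTS
  -- `S = (t + 2)⁻¹ • T + ((t + 1) / (t + 2)) • w` with `w := (t + 1)⁻¹ • ((t + 2) • S - T) ∈ C`
  have hw : (t + 1)⁻¹ • ((t + 2) • S - T) ∈ C := by
    refine C.smul_mem (by positivity) ?_
    convert C.add_mem htST (C.smul_mem zero_le_two hS) using 1
    module
  convert C.convex.combo_intrinsicInterior_self_mem_intrinsicInterior hT hw
    (a := (t + 2)⁻¹) (b := (t + 1) / (t + 2)) (by positivity) (by positivity)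
    (by field_simp; ring) using 1
  have : t + 1 ≠ 0 := by positivity
  match_scalars <;> field_simp
  ring

end PointedCone

section FaceChain

variable {E : Type*} [AddCommGroup E] [Module ℝ E] {C : PointedCone ℝ E} {F : Set E}

theorem IsFace.smul_mem (hF : IsFace (C : Set E) F) {z : E} (hz : z ∈ F) {t : ℝ} (ht : 0 ≤ t) :
    t • z ∈ F := by
  have hzero : (0 : E) ∈ F := by
    refine (hF.2.2 (C.smul_mem zero_le_two (hF.1 hz)) C.zero_mem one_half_pos one_half_lt_one ?_).2
    rwa [smul_zero, add_zero, smul_smul, one_div, inv_mul_cancel₀ two_ne_zero, one_smul]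
  rcases le_or_gt t 1 with ht1 | ht1
  · simpa using hF.2.1 hz hzero ht (sub_nonneg.2 ht1) (add_sub_cancel t 1)
  · refine (hF.2.2 (C.smul_mem ht (hF.1 hz)) C.zero_mem (inv_pos.2 (zero_lt_one.trans ht1))
      (inv_lt_one_of_one_lt₀ ht1) ?_).1
    rwa [smul_zero, add_zero, smul_smul, inv_mul_cancel₀ (zero_lt_one.trans ht1).ne', one_smul]

def IsFace.toPointedCone (hF : IsFace (C : Set E) F) (hne : F.Nonempty) : PointedCone ℝ E :=
  hF.2.1.toPointedCone (by simpa using hF.smul_mem hne.some_mem le_rfl)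
    fun _ hz _ ht => hF.smul_mem hz ht

theorem IsFace.isFaceOf_toPointedCone (hF : IsFace (C : Set E) F) (hne : F.Nonempty) :
    (hF.toPointedCone hne).IsFaceOf C := by
  refine ⟨hF.1, fun {x y a} hx hy ha (hxy : a • x + y ∈ F) => ?_⟩
  have h2 : (2 * a) • x ∈ F := by
    refine (hF.2.2 (C.smul_mem (by positivity) hx) (C.smul_mem zero_le_two hy) one_half_pos
      one_half_lt_one ?_).1
    convert hxy using 1
    module
  have h := hF.smul_mem h2 (inv_nonneg.2 (by positivity : 0 ≤ 2 * a))
  rwa [smul_smul, inv_mul_cancel₀ (by positivity), one_smul] at h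

theorem length_le_finrank_add_one_of_isFace_chain [FiniteDimensional ℝ E] {l : ℕ}
    {F : Fin l → Set E} (hF : ∀ i, IsFace (C : Set E) (F i) ∧ (F i).Nonempty)
    (hchain : ∀ i j : Fin l, i < j → F i ⊂ F j) : l ≤ Module.finrank ℝ E + 1 := by
  let P i := (hF i).1.toPointedCone (hF i).2
  let rank (i : Fin l) : Fin (Module.finrank ℝ E + 1) :=
    ⟨Module.finrank ℝ (Submodule.span ℝ (P i : Set E)), Nat.lt_succ_of_le (Submodule.finrank_le _)⟩
  have hrank : StrictMono rank := fun i j hij =>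
    Submodule.finrank_lt_finrank_of_lt <| ((hF i).1.isFaceOf_toPointedCone (hF i).2).span_lt_span
      ((hF j).1.isFaceOf_toPointedCone (hF j).2).le (SetLike.coe_ssubset_coe.1 (hchain i j hij))
  exact Fin.le_of_injective rank hrank.injective

theorem LTSeries.length_lt_faceChainLength [FiniteDimensional ℝ E]
    (p : LTSeries {F : PointedCone ℝ E // F.IsFaceOf C}) :
    p.length < faceChainLength (C : Set E) := by
  refine Nat.lt_of_succ_le (le_csSup ⟨Module.finrank ℝ E + 1, fun l ⟨F, hF, hchain⟩ =>
    length_le_finrank_add_one_of_isFace_chain hF hchain⟩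
    ⟨fun i => p i, fun i => ⟨(p i).2.isFace, 0, (p i).1.zero_mem⟩, fun i j hij => ?_⟩)
  exact SetLike.coe_ssubset_coe.2 (Subtype.coe_lt_coe.2 (p.strictMono hij))

end FaceChain

/-- If `K` is a closed convex cone and `x₁, …, xₙ ∈ K` are such that
`x₁ + ⋯ + xₙ` is in the relative interior of `K`, then there is `I ⊆ [n]` with
`|I| ≤ ℓ(K) - 1` such that `Σ_{i ∈ I} xᵢ` is in the relative interior of `K`. -/
theorem statement_4 {d : ℕ} (K : Set (EuclideanSpace ℝ (Fin d)))
    (hK : IsClosedConvexCone K) (n : ℕ) (x : Fin n → EuclideanSpace ℝ (Fin d))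
    (hx : ∀ i, x i ∈ K) (hsum : (∑ i, x i) ∈ intrinsicInterior ℝ K) :
    ∃ I : Finset (Fin n), I.card ≤ faceChainLength K - 1 ∧
      (∑ i ∈ I, x i) ∈ intrinsicInterior ℝ K := by
  let C := hK.toPointedCone
  obtain ⟨I, p, hp, hI⟩ := C.exists_ltSeries_faces_sum_mem_minFace x hx
  refine ⟨I, ?_, C.mem_intrinsicInterior_of_mem_minFace hsum (C.sum_mem fun i _ => hx i) hI⟩
  have : p.length < faceChainLength K := p.length_lt_faceChainLength
  omega
end
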